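/- Second-Order Soundness and Completeness: for a second-order equational presentation ℰ = (Σ, E), an equation Θ ▹ Γ ⊢ s ≡ t is derivable from E in Second-Order Equational Logic if and only if every ℰ-model A in Set^𝔽 satisfies it, i.e. the interpretations ⟦Θ ▹ Γ ⊢ s⟧_A and ⟦Θ ▹ Γ ⊢ t⟧_A are equal morphisms ⟦Θ ▹ Γ⟧_A → A in Set^𝔽. -/

import Mathlib

/-! ## Second-order syntax (de Bruijn representation)

An arity/sequence `(m₁,…,m_k) ∈ ℕ*` is a `Ctxa`.  A second-order signature is a set of
operators with such arities.  Terms in a metavariable context (given by a type `M` of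
metavariables with meta-arities `mar : M → ℕ`) and a variable context of size `n` are
generated by variables, metavariables applied to their parameters, and operators binding
variables in their arguments.  Working with de Bruijn indices gives terms up to
α-equivalence. -/

/-- A finite sequence `(m₁,…,m_k)` of natural numbers (an element of ℕ*). -/
structure Ctxa where
  len : ℕ
  ar : Fin len → ℕ

/-- A second-order signature: a set of operators with arities `(n₁,…,n_k) ∈ ℕ*`;
an operator of arity `(n₁,…,n_k)` takes `k` arguments and binds `nᵢ` variables in the
`i`-th argument. -/
structure SOSig : Type 1 where
  Op : Type
  arity : Op → Ctxa

namespace SO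

/-- Second-order terms over the signature `S`, in metavariable context `(M, mar)` and
variable context of size `n` (variables are de Bruijn indices `Fin n`, so terms are
automatically identified up to α-equivalence). -/
inductive Term (S : SOSig) (M : Type) (mar : M → ℕ) : ℕ → Type
  | var {n : ℕ} : Fin n → Term S M mar n
  | mvar {n : ℕ} (m : M) (ts : Fin (mar m) → Term S M mar n) : Term S M mar n
  | op {n : ℕ} (o : S.Op)
      (ts : ∀ i : Fin (S.arity o).len, Term S M mar (n + (S.arity o).ar i)) :
      Term S M mar n

namespace Term

variable {S : SOSig} {M M' : Type} {mar : M → ℕ} {mar' : M' → ℕ}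

/-- Cast a term along an equality of variable-context sizes. -/
def castCtx {n n' : ℕ} (h : n = n') (t : Term S M mar n) : Term S M mar n' := h ▸ t

/-- Extend a renaming to a context enlarged by `p` bound variables. -/
def extRen {n n' : ℕ} (ρ : Fin n → Fin n') (p : ℕ) : Fin (n + p) → Fin (n' + p) :=
  Fin.addCases (fun j => Fin.castAdd p (ρ j)) (fun j => Fin.natAdd n' j)

/-- Renaming of variables. -/
def rename : ∀ {n n' : ℕ}, Term S M mar n → (Fin n → Fin n') → Term S M mar n'
  | _, _, .var x, ρ => .var (ρ x)
  | _, _, .mvar m ts, ρ => .mvar m (fun j => rename (ts j) ρ)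
  | _, _, .op o ts, ρ => .op o (fun i => rename (ts i) (extRen ρ _))

/-- Weakening of a term by `p` fresh variables (added at the end of the context). -/
def weaken {n : ℕ} (p : ℕ) (t : Term S M mar n) : Term S M mar (n + p) :=
  rename t (Fin.castAdd p)

/-- Extend a simultaneous substitution to a context enlarged by `p` bound variables
(the bound variables are mapped to themselves). -/
def extSub {n n' : ℕ} (σ : Fin n → Term S M mar n') (p : ℕ) :
    Fin (n + p) → Term S M mar (n' + p) :=
  Fin.addCases (fun j => weaken p (σ j)) (fun j => .var (Fin.natAdd n' j))

/-- Capture-avoiding simultaneous substitution `t{xᵢ := σ(i)}` of terms for variables. -/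
def subst : ∀ {n n' : ℕ}, Term S M mar n → (Fin n → Term S M mar n') → Term S M mar n'
  | _, _, .var x, σ => σ x
  | _, _, .mvar m ts, σ => .mvar m (fun j => subst (ts j) σ)
  | _, _, .op o ts, σ => .op o (fun i => subst (ts i) (extSub σ _))

/-- The renaming inserting `p` fresh variables in the middle of a context `n' + a`
(between the first `n'` variables and the last `a` bound ones). -/
def midWeak (n' p a : ℕ) : Fin (n' + a) → Fin (n' + p + a) :=
  Fin.addCases (fun j => Fin.castAdd a (Fin.castAdd p j)) (fun j => Fin.natAdd (n' + p) j)

/-- Metasubstitution `t{𝕞 := (x⃗_𝕞)s(𝕞)}` (simultaneously renaming the variables of `t`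
along `ρ`): each metavariable `𝕞` of meta-arity `mar 𝕞` is replaced by the term
`s 𝕞`, which lives in the target context extended by `mar 𝕞` abstracted variables;
the parameters of `𝕞` are substituted for those abstracted variables. -/
def msubst : ∀ {n n' : ℕ}, Term S M mar n → (Fin n → Fin n') →
    (∀ m : M, Term S M' mar' (n' + mar m)) → Term S M' mar' n'
  | _, _, .var x, ρ, _ => .var (ρ x)
  | _, _, .mvar m ts, ρ, s =>
      subst (s m) (Fin.addCases (fun j => .var j) (fun j => msubst (ts j) ρ s))
  | _, _, .op o ts, ρ, s =>
      .op o (fun i => msubst (ts i) (extRen ρ _) (fun m => rename (s m) (midWeak _ _ _)))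

end Term

end SO
namespace SO

/-- A second-order equation `Θ ▹ Γ ⊢ lhs ≡ rhs` in a metavariable context
`𝕞₁:[m₁],…,𝕞_k:[m_k]` (given by `mlen` and `mar`) and a variable context of size
`ctx`. -/
structure SOEqn (S : SOSig) where
  mlen : ℕ
  mar : Fin mlen → ℕ
  ctx : ℕ
  lhs : Term S (Fin mlen) mar ctx
  rhs : Term S (Fin mlen) mar ctx

/-- The renaming regarding a context `Δ,x⃗` (of size `d + a`) inside `Γ,Δ,x⃗`
(of size `(n + d) + a`). -/
def sideWeak (n d a : ℕ) : Fin (d + a) → Fin (n + d + a) :=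
  Fin.addCases (fun j => Fin.castAdd a (Fin.natAdd n j)) (fun j => Fin.natAdd (n + d) j)

/-- **Second-Order Equational Logic**: derivability of an equation
`Θ ▹ Γ ⊢ s ≡ t` from a set `E` of axioms, by the rules: (Axioms) every axiom is
derivable; (Equivalence) reflexivity, symmetry, transitivity; (Extended
metasubstitution) from `𝕞₁:[m₁],…,𝕞_k:[m_k] ▹ Γ ⊢ s ≡ t` (with `Γ` of size `n`) and
`Θ ▹ Δ, x⃗ᵢ ⊢ σᵢ ≡ τᵢ` (`1 ≤ i ≤ k`, `Δ` of size `d`) derive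
`Θ ▹ Γ, Δ ⊢ s{𝕞ᵢ := (x⃗ᵢ)σᵢ} ≡ t{𝕞ᵢ := (x⃗ᵢ)τᵢ}`. -/
inductive SODeriv (S : SOSig) (E : Set (SOEqn S)) :
    ∀ (k : ℕ) (mar : Fin k → ℕ) (n : ℕ),
      Term S (Fin k) mar n → Term S (Fin k) mar n → Prop
  | ax {e : SOEqn S} (he : e ∈ E) : SODeriv S E e.mlen e.mar e.ctx e.lhs e.rhs
  | refl {k : ℕ} {mar : Fin k → ℕ} {n : ℕ} (t : Term S (Fin k) mar n) :
      SODeriv S E k mar n t t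
  | symm {k : ℕ} {mar : Fin k → ℕ} {n : ℕ} {s t : Term S (Fin k) mar n} :
      SODeriv S E k mar n s t → SODeriv S E k mar n t s
  | trans {k : ℕ} {mar : Fin k → ℕ} {n : ℕ} {s t u : Term S (Fin k) mar n} :
      SODeriv S E k mar n s t → SODeriv S E k mar n t u → SODeriv S E k mar n s u
  | msub {k : ℕ} {mar : Fin k → ℕ} {n : ℕ} {s t : Term S (Fin k) mar n}
      {k' : ℕ} {mar' : Fin k' → ℕ} {d : ℕ}
      {σ τ : ∀ i : Fin k, Term S (Fin k') mar' (d + mar i)} :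
      SODeriv S E k mar n s t →
      (∀ i, SODeriv S E k' mar' (d + mar i) (σ i) (τ i)) →
      SODeriv S E k' mar' (n + d)
        (Term.msubst s (Fin.castAdd d)
          (fun i => Term.rename (σ i) (sideWeak n d (mar i))))
        (Term.msubst t (Fin.castAdd d)
          (fun i => Term.rename (τ i) (sideWeak n d (mar i))))

end SO
namespace SO

/-- A monoid for the substitution monoidal structure `(Set^𝔽, y1, ⊗)` on the presheaf
category of sets in variable contexts, described elementwise: a presheaf `F` on the
category `𝔽` of finite cardinals (`F`, `map`, functoriality), a point `ν : y1 → F`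
(natural family `ν`), and a multiplication `ς : F ⊗ F → F` for the substitution tensor
`X ⊗ Y = ∫^k X(k) × Y^k`, whose components, by the universal property of the coend,
amount exactly to a family `mult : F k → (Fin k → F n) → F n` that is dinatural in `k`
and natural in `n`, satisfying the monoid unit and associativity laws. -/
structure SubstMonoid : Type 1 where
  F : ℕ → Type
  map : ∀ {m n : ℕ}, (Fin m → Fin n) → F m → F n
  map_id : ∀ {n : ℕ} (x : F n), map id x = x
  map_comp : ∀ {m n p : ℕ} (f : Fin m → Fin n) (g : Fin n → Fin p) (x : F m),
    map (g ∘ f) x = map g (map f x)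
  ν : ∀ {n : ℕ}, Fin n → F n
  ν_nat : ∀ {m n : ℕ} (ρ : Fin m → Fin n) (i : Fin m), map ρ (ν i) = ν (ρ i)
  mult : ∀ {k n : ℕ}, F k → (Fin k → F n) → F n
  mult_dinat : ∀ {k k' n : ℕ} (ρ : Fin k → Fin k') (a : F k) (g : Fin k' → F n),
    mult (map ρ a) g = mult a (fun i => g (ρ i))
  mult_nat : ∀ {k n n' : ℕ} (ρ : Fin n → Fin n') (a : F k) (g : Fin k → F n),
    map ρ (mult a g) = mult a (fun i => map ρ (g i))
  mult_unit_left : ∀ {k n : ℕ} (i : Fin k) (g : Fin k → F n), mult (ν i) g = g i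
  mult_unit_right : ∀ {n : ℕ} (a : F n), mult a ν = a
  mult_assoc : ∀ {k m n : ℕ} (a : F k) (f : Fin k → F m) (g : Fin m → F n),
    mult (mult a f) g = mult a (fun i => mult (f i) g)

/-- Extension of a substitution family by `p` fresh (bound) variables: old values are
weakened and the fresh variables are sent to variables via the unit.  This is the
elementwise form of the canonical pointed strength of the signature endofunctor. -/
def SubstMonoid.extMult (A : SubstMonoid) {n n' : ℕ} (g : Fin n → A.F n') (p : ℕ) :
    Fin (n + p) → A.F (n' + p) :=
  Fin.addCases (fun j => A.map (Fin.castAdd p) (g j)) (fun j => A.ν (Fin.natAdd n' j))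

/-- A model (`Σ`-monoid) for a second-order signature `S` in `Set^𝔽`: a substitution
monoid `A` together with an algebra structure `opMap` for the signature endofunctor
`F_Σ X = ∐_ω ∏ᵢ X^{y nᵢ}` (elementwise, using `X^{y nᵢ}(m) = X(m + nᵢ)`), natural in
the stage, and compatible with the monoid multiplication via the canonical pointed
strength (`opMap_mult`). -/
structure SOModel (S : SOSig) : Type 1 extends SubstMonoid where
  opMap : ∀ (o : S.Op) {n : ℕ},
    (∀ i : Fin (S.arity o).len, F (n + (S.arity o).ar i)) → F n
  opMap_nat : ∀ (o : S.Op) {n n' : ℕ} (ρ : Fin n → Fin n')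
      (ts : ∀ i : Fin (S.arity o).len, F (n + (S.arity o).ar i)),
    map ρ (opMap o ts) = opMap o (fun i => map (Term.extRen ρ _) (ts i))
  opMap_mult : ∀ (o : S.Op) {n n' : ℕ}
      (ts : ∀ i : Fin (S.arity o).len, F (n + (S.arity o).ar i)) (g : Fin n → F n'),
    mult (opMap o ts) g =
      opMap o (fun i => mult (ts i) (SubstMonoid.extMult toSubstMonoid g _))

/-- The interpretation `⟦Θ ▹ Γ ⊢ t⟧_A : ⟦Θ ▹ Γ⟧_A → A` of a second-order term in a
model `A`, where `⟦Θ ▹ Γ⟧_A = ∏ᵢ A^{y mᵢ} × y n`, described at stage `j` (an element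
of `⟦Θ ▹ Γ⟧_A (j)` being a pair of `θ : ∀ i, A (j + mᵢ)` and `γ : Fin n → Fin j`):
variables are interpreted via the unit `ν`, metavariables via the substitution
operation induced by the multiplication, and operators via the algebra structure. -/
def interp {S : SOSig} (A : SOModel S) {k : ℕ} {mar : Fin k → ℕ} :
    ∀ {n j : ℕ}, Term S (Fin k) mar n →
      (∀ i : Fin k, A.F (j + mar i)) → (Fin n → Fin j) → A.F j
  | _, _, .var x, _, γ => A.ν (γ x)
  | _, _, .mvar m ts, θ, γ =>
      A.mult (θ m)
        (Fin.addCases (fun v => A.ν v) (fun v => interp A (ts v) θ γ))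
  | _, _, .op o ts, θ, γ =>
      A.opMap o (fun i =>
        interp A (ts i) (fun m => A.map (Term.midWeak _ _ (mar m)) (θ m))
          (Term.extRen γ _))

/-- A model satisfies an equation when the interpretations of its two sides are equal
morphisms `⟦Θ ▹ Γ⟧_A → A` in `Set^𝔽`. -/
def SOModel.Sat {S : SOSig} (A : SOModel S) (e : SOEqn S) : Prop :=
  ∀ (j : ℕ) (θ : ∀ i : Fin e.mlen, A.F (j + e.mar i)) (γ : Fin e.ctx → Fin j),
    interp A e.lhs θ γ = interp A e.rhs θ γ

end SO

open SO SO.Term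

/-!
Soundness is by induction on derivations. The only substantial case is extended
metasubstitution, which is the semantic metasubstitution lemma: interpreting `s{𝕞ᵢ := (x⃗ᵢ)σᵢ}`
is interpreting `s` with `𝕞ᵢ` sent to the interpretation of `σᵢ`. It rests on the substitution
lemma for valuations of the variables in the model, which in turn uses the monoid laws and the
compatibility of the operators with substitution through the pointed strength.

Completeness goes through the term model: terms in a fixed metavariable context modulo
derivability. Derivability is a congruence for renaming, substitution and the operators, since
each of them is an instance of extended metasubstitution applied to a trivial equation; hence the
syntactic operations descend to the quotient and make it a Σ-monoid. It satisfies the axioms by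
the metasubstitution rule, and under the generic assignment `𝕞ᵢ ↦ 𝕞ᵢ[x⃗]` it interprets every
term as its own class, so an equation valid in it is derivable.
-/

namespace SO.Term

variable {S : SOSig} {M : Type} {mar : M → ℕ}

@[simp]
theorem extRen_castAdd {n n' : ℕ} (ρ : Fin n → Fin n') (p : ℕ) (x : Fin n) :
    extRen ρ p (Fin.castAdd p x) = Fin.castAdd p (ρ x) := by
  simp [extRen]

@[simp]
theorem extRen_natAdd {n n' : ℕ} (ρ : Fin n → Fin n') (p : ℕ) (x : Fin p) :
    extRen ρ p (Fin.natAdd n x) = Fin.natAdd n' x := by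
  simp [extRen]

@[simp]
theorem extRen_id (n p : ℕ) : extRen (fun y : Fin n => y) p = fun x => x := by
  funext x
  induction x using Fin.addCases <;> simp

theorem extRen_extRen {n₁ n₂ n₃ : ℕ} (f : Fin n₁ → Fin n₂) (g : Fin n₂ → Fin n₃) (p : ℕ)
    (x : Fin (n₁ + p)) : extRen g p (extRen f p x) = extRen (fun y => g (f y)) p x := by
  induction x using Fin.addCases <;> simp

theorem midWeak_eq_extRen (n' p a : ℕ) : midWeak n' p a = extRen (Fin.castAdd p) a := rfl

theorem sideWeak_eq_extRen (n d a : ℕ) : sideWeak n d a = extRen (Fin.natAdd n) a := rfl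

theorem rename_castCtx {n n' j : ℕ} (h : n = n') (t : Term S M mar n) (π : Fin n' → Fin j) :
    rename (castCtx h t) π = rename t (fun x => π (Fin.cast h x)) := by
  subst h
  rfl

@[simp]
theorem extSub_castAdd {n n' : ℕ} (σ : Fin n → Term S M mar n') (p : ℕ) (x : Fin n) :
    extSub σ p (Fin.castAdd p x) = weaken p (σ x) := by
  simp [extSub]

@[simp]
theorem extSub_natAdd {n n' : ℕ} (σ : Fin n → Term S M mar n') (p : ℕ) (x : Fin p) :
    extSub σ p (Fin.natAdd n x) = .var (Fin.natAdd n' x) := by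
  simp [extSub]

theorem rename_rename {n₁ n₂ n₃ : ℕ} (t : Term S M mar n₁) (f : Fin n₁ → Fin n₂)
    (g : Fin n₂ → Fin n₃) : rename (rename t f) g = rename t (fun x => g (f x)) := by
  induction t generalizing n₂ n₃ with
  | var x => rfl
  | mvar m ts ih => simp [rename, ih]
  | op o ts ih => simp [rename, ih, extRen_extRen]

@[simp]
theorem rename_id {n : ℕ} (t : Term S M mar n) : rename t (fun x => x) = t := by
  induction t with
  | var x => rfl
  | mvar m ts ih => simp [rename, ih]
  | op o ts ih => simp [rename, ih]

theorem extSub_extRen {n₁ n₂ n₃ : ℕ} (f : Fin n₁ → Fin n₂) (σ : Fin n₂ → Term S M mar n₃)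
    (p : ℕ) (x : Fin (n₁ + p)) : extSub σ p (extRen f p x) = extSub (fun y => σ (f y)) p x := by
  induction x using Fin.addCases <;> simp

theorem subst_rename {n₁ n₂ n₃ : ℕ} (t : Term S M mar n₁) (f : Fin n₁ → Fin n₂)
    (σ : Fin n₂ → Term S M mar n₃) : subst (rename t f) σ = subst t (fun x => σ (f x)) := by
  induction t generalizing n₂ n₃ with
  | var x => rfl
  | mvar m ts ih => simp [rename, subst, ih]
  | op o ts ih => simp [rename, subst, ih, extSub_extRen]

theorem rename_extSub {n₁ n₂ n₃ : ℕ} (σ : Fin n₁ → Term S M mar n₂) (f : Fin n₂ → Fin n₃)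
    (p : ℕ) (x : Fin (n₁ + p)) :
    rename (extSub σ p x) (extRen f p) = extSub (fun y => rename (σ y) f) p x := by
  induction x using Fin.addCases <;> simp [weaken, rename, rename_rename]

theorem rename_subst {n₁ n₂ n₃ : ℕ} (t : Term S M mar n₁) (σ : Fin n₁ → Term S M mar n₂)
    (f : Fin n₂ → Fin n₃) : rename (subst t σ) f = subst t (fun x => rename (σ x) f) := by
  induction t generalizing n₂ n₃ with
  | var x => rfl
  | mvar m ts ih => simp [rename, subst, ih]
  | op o ts ih => simp [rename, subst, ih, rename_extSub]

theorem extSub_var_comp {n n' : ℕ} (π : Fin n → Fin n') (p : ℕ) :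
    extSub (fun y => (.var (π y) : Term S M mar n')) p = fun x => .var (extRen π p x) := by
  funext x
  induction x using Fin.addCases <;> simp [weaken, rename]

theorem subst_var_comp {n n' : ℕ} (t : Term S M mar n) (π : Fin n → Fin n') :
    subst t (fun x => .var (π x)) = rename t π := by
  induction t generalizing n' with
  | var x => rfl
  | mvar m ts ih => simp [rename, subst, ih]
  | op o ts ih => simp [rename, subst, extSub_var_comp, ih]

@[simp]
theorem subst_var {n : ℕ} (t : Term S M mar n) : subst t (fun x => .var x) = t := by
  simpa using subst_var_comp t (fun x => x)

theorem subst_extSub {n₁ n₂ n₃ : ℕ} (σ : Fin n₁ → Term S M mar n₂)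
    (τ : Fin n₂ → Term S M mar n₃) (p : ℕ) (x : Fin (n₁ + p)) :
    subst (extSub σ p x) (extSub τ p) = extSub (fun y => subst (σ y) τ) p x := by
  induction x using Fin.addCases <;> simp [weaken, subst, subst_rename, rename_subst]

theorem subst_subst {n₁ n₂ n₃ : ℕ} (t : Term S M mar n₁) (σ : Fin n₁ → Term S M mar n₂)
    (τ : Fin n₂ → Term S M mar n₃) :
    subst (subst t σ) τ = subst t (fun x => subst (σ x) τ) := by
  induction t generalizing n₂ n₃ with
  | var x => rfl
  | mvar m ts ih => simp [subst, ih]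
  | op o ts ih => simp [subst, ih, subst_extSub]

variable {M' : Type} {mar' : M' → ℕ}

theorem rename_msubst {n₁ n₂ n₃ : ℕ} (t : Term S M mar n₁) (ρ : Fin n₁ → Fin n₂)
    (s : ∀ m, Term S M' mar' (n₂ + mar m)) (π : Fin n₂ → Fin n₃) :
    rename (msubst t ρ s) π
      = msubst t (fun x => π (ρ x)) (fun m => rename (s m) (extRen π (mar m))) := by
  induction t generalizing n₂ n₃ with
  | var x => rfl
  | mvar m ts ih =>
    simp only [msubst, rename_subst, subst_rename]
    congr 1
    funext x
    induction x using Fin.addCases <;> simp [rename, ih]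
  | op o ts ih =>
    simp [msubst, rename, ih, midWeak_eq_extRen, rename_rename, extRen_extRen]

theorem msubst_mvar_var {n₁ n₂ : ℕ} (m : M) (π : Fin (mar m) → Fin n₁) (ρ : Fin n₁ → Fin n₂)
    (s : ∀ m, Term S M' mar' (n₂ + mar m)) :
    msubst (.mvar m fun v => .var (π v)) ρ s
      = rename (s m) (Fin.addCases (fun x => x) (fun v => ρ (π v))) := by
  rw [msubst, ← subst_var_comp]
  congr 1
  funext x
  induction x using Fin.addCases <;> simp [msubst]

theorem msubst_mvar_self {k n₁ n₂ : ℕ} {mar : Fin k → ℕ} (t : Term S (Fin k) mar n₁)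
    (ρ : Fin n₁ → Fin n₂) :
    msubst t ρ (fun i => .mvar i fun v => .var (Fin.natAdd n₂ v)) = rename t ρ := by
  induction t generalizing n₂ with
  | var x => rfl
  | mvar m ts ih => simp [msubst, subst, rename, ih]
  | op o ts ih =>
    simp only [msubst, rename, ← ih]
    simp [midWeak_eq_extRen]

end SO.Term

namespace SO

variable {S : SOSig} {E : Set (SOEqn S)} {k : ℕ} {mar : Fin k → ℕ}

theorem SODeriv.cast {n n' : ℕ} (h : n = n') {s t : Term S (Fin k) mar n}
    (D : SODeriv S E k mar n s t) : SODeriv S E k mar n' (castCtx h s) (castCtx h t) := by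
  subst h
  exact D

/-- The metasubstitution rule applied to the trivial equation `𝕞[ρ x⃗] ≡ 𝕞[ρ x⃗]`. -/
theorem SODeriv.rename_addCases {d p n : ℕ} {s t : Term S (Fin k) mar (d + p)}
    (D : SODeriv S E k mar (d + p) s t) (ρ : Fin p → Fin n) :
    SODeriv S E k mar (n + d)
      (rename s (Fin.addCases (Fin.natAdd n) (fun v => Fin.castAdd d (ρ v))))
      (rename t (Fin.addCases (Fin.natAdd n) (fun v => Fin.castAdd d (ρ v)))) := by
  have h := (SODeriv.refl (E := E)
    (.mvar (0 : Fin 1) (fun v => .var (ρ v)) : Term S (Fin 1) (fun _ => p) n)).msub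
    (σ := fun _ => s) (τ := fun _ => t) (fun _ => D)
  have hcomp : ∀ x : Fin (d + p),
      (Fin.addCases (fun x => x) (fun v => Fin.castAdd d (ρ v)) (sideWeak n d p x) : Fin (n + d))
        = Fin.addCases (Fin.natAdd n) (fun v => Fin.castAdd d (ρ v)) x := by
    intro x
    induction x using Fin.addCases <;> simp [sideWeak_eq_extRen]
  simpa [msubst_mvar_var, rename_rename, hcomp] using h

/-- The rule only produces contexts of the form `d + p`; renaming is the case `d = 0`, up to a
cast along `0 + n = n`. -/
theorem SODeriv.rename {n n' : ℕ} {s t : Term S (Fin k) mar n} (D : SODeriv S E k mar n s t)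
    (ρ : Fin n → Fin n') : SODeriv S E k mar n' (Term.rename s ρ) (Term.rename t ρ) := by
  have h := (D.cast (Nat.zero_add n).symm).rename_addCases ρ
  have hρ : (fun x => (Fin.addCases (Fin.natAdd n') (fun v => Fin.castAdd 0 (ρ v))
      (Fin.cast (Nat.zero_add n).symm x) : Fin (n' + 0))) = ρ := by
    funext x
    rw [show Fin.cast (Nat.zero_add n).symm x = Fin.natAdd 0 x from Fin.ext (by simp),
      Fin.addCases_right]
    rfl
  rwa [rename_castCtx, rename_castCtx, hρ] at h

/-- The rule yields the context `Γ, Δ`, which is collapsed onto `Δ` by renaming along `[ρ, id]`. -/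
theorem SODeriv.msubst {n n₁ : ℕ} {s t : Term S (Fin k) mar n} (D : SODeriv S E k mar n s t)
    {k' : ℕ} {mar' : Fin k' → ℕ} (ρ : Fin n → Fin n₁)
    {σ τ : ∀ i : Fin k, Term S (Fin k') mar' (n₁ + mar i)}
    (h : ∀ i, SODeriv S E k' mar' (n₁ + mar i) (σ i) (τ i)) :
    SODeriv S E k' mar' n₁ (Term.msubst s ρ σ) (Term.msubst t ρ τ) := by
  simpa [rename_msubst, sideWeak_eq_extRen, rename_rename, extRen_extRen] using
    (D.msub h).rename (Fin.addCases ρ (fun y => y))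

/-- Metasubstitute `𝕞₀ := a` and `𝕞ᵢ := f i` in `𝕞₀[𝕞₁, …, 𝕞ₘ]`. -/
theorem SODeriv.subst {m n : ℕ} {a b : Term S (Fin k) mar m} (D : SODeriv S E k mar m a b)
    {f g : Fin m → Term S (Fin k) mar n} (h : ∀ x, SODeriv S E k mar n (f x) (g x)) :
    SODeriv S E k mar n (Term.subst a f) (Term.subst b g) := by
  let u : Term S (Fin (m + 1)) (Fin.cons m fun _ => 0) 0 := .mvar 0 fun v => .mvar v.succ Fin.elim0
  have := (SODeriv.refl (E := E) u).msubst (Fin.elim0 : Fin 0 → Fin n)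
    (σ := Fin.cons (Term.rename a (Fin.natAdd n)) f)
    (τ := Fin.cons (Term.rename b (Fin.natAdd n)) g) (Fin.cases (D.rename _) h)
  have key : ∀ (c : Term S (Fin k) mar m) (f' : Fin m → Term S (Fin k) mar n),
      Term.msubst u Fin.elim0 (Fin.cons (Term.rename c (Fin.natAdd n)) f') = Term.subst c f' := by
    intro c f'
    show Term.subst (Term.rename c (Fin.natAdd n))
      (Fin.addCases (fun j => Term.var j) fun v => Term.subst (f' v) _) = _
    rw [subst_rename]
    congr 1
    funext x
    rw [Fin.addCases_right]
    conv_rhs => rw [← subst_var (f' x)]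
    congr 1
    funext i
    exact Fin.addCases_left (m := n) (n := 0) i
  rwa [key, key] at this

/-- Metasubstitute `𝕞ᵢ := cs i` in `o((x⃗)𝕞₁[x⃗], …, (x⃗)𝕞ₖ[x⃗])`. -/
theorem SODeriv.op {n : ℕ} (o : S.Op)
    {cs ds : ∀ i : Fin (S.arity o).len, Term S (Fin k) mar (n + (S.arity o).ar i)}
    (h : ∀ i, SODeriv S E k mar (n + (S.arity o).ar i) (cs i) (ds i)) :
    SODeriv S E k mar n (.op o cs) (.op o ds) := by
  let u : Term S (Fin (S.arity o).len) (S.arity o).ar 0 :=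
    .op o fun i => .mvar i fun v => .var (Fin.natAdd 0 v)
  have hcomp : ∀ (i : Fin (S.arity o).len) (x : Fin (n + (S.arity o).ar i)),
      (Fin.addCases (fun y => y) (fun v => extRen (Fin.elim0 : Fin 0 → Fin n) _ (Fin.natAdd 0 v))
        (midWeak n _ _ x) : Fin (n + (S.arity o).ar i)) = x := by
    intro i x
    induction x using Fin.addCases <;>
      simp only [midWeak_eq_extRen, extRen_castAdd, extRen_natAdd, Fin.addCases_left,
        Fin.addCases_right]
  simpa only [u, Term.msubst.eq_3, msubst_mvar_var, rename_rename, hcomp, rename_id] using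
    (SODeriv.refl (E := E) u).msubst (Fin.elim0 : Fin 0 → Fin n) h

end SO

namespace SO.SubstMonoid

variable (A : SubstMonoid)

theorem map_map {m n p : ℕ} (f : Fin m → Fin n) (g : Fin n → Fin p) (x : A.F m) :
    A.map g (A.map f x) = A.map (fun y => g (f y)) x :=
  (A.map_comp f g x).symm

@[simp]
theorem extMult_castAdd {n n' : ℕ} (g : Fin n → A.F n') (p : ℕ) (x : Fin n) :
    A.extMult g p (Fin.castAdd p x) = A.map (Fin.castAdd p) (g x) := by
  simp [extMult]

@[simp]
theorem extMult_natAdd {n n' : ℕ} (g : Fin n → A.F n') (p : ℕ) (x : Fin p) :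
    A.extMult g p (Fin.natAdd n x) = A.ν (Fin.natAdd n' x) := by
  simp [extMult]

theorem extMult_ν {n n' : ℕ} (γ : Fin n → Fin n') (p : ℕ) :
    A.extMult (fun x => A.ν (γ x)) p = fun x => A.ν (extRen γ p x) := by
  funext x
  induction x using Fin.addCases <;> simp [A.ν_nat]

theorem extMult_extRen {n₁ n₂ n' : ℕ} (r : Fin n₁ → Fin n₂) (g : Fin n₂ → A.F n') (p : ℕ)
    (x : Fin (n₁ + p)) : A.extMult g p (extRen r p x) = A.extMult (fun y => g (r y)) p x := by
  induction x using Fin.addCases <;> simp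

theorem map_extMult {n n₁ n₂ : ℕ} (ρ : Fin n₁ → Fin n₂) (g : Fin n → A.F n₁) (p : ℕ)
    (x : Fin (n + p)) :
    A.map (extRen ρ p) (A.extMult g p x) = A.extMult (fun y => A.map ρ (g y)) p x := by
  induction x using Fin.addCases <;> simp [map_map, A.ν_nat]

theorem mult_extMult {n₁ n₂ n₃ : ℕ} (g : Fin n₁ → A.F n₂) (h : Fin n₂ → A.F n₃) (p : ℕ)
    (x : Fin (n₁ + p)) :
    A.mult (A.extMult g p x) (A.extMult h p) = A.extMult (fun y => A.mult (g y) h) p x := by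
  induction x using Fin.addCases <;> simp [A.mult_dinat, A.mult_nat, A.mult_unit_left]

theorem mult_map_midWeak {n n' : ℕ} (a b : ℕ) (x : A.F (n + b)) (h : Fin n → A.F n') :
    A.mult (A.map (midWeak n a b) x) (A.extMult (A.extMult h a) b)
      = A.map (midWeak n' a b) (A.mult x (A.extMult h b)) := by
  simp [A.mult_dinat, A.mult_nat, midWeak_eq_extRen, extMult_extRen, map_extMult]

theorem mult_extMult_addCases {n n' p : ℕ} (g : Fin n → A.F n') (v : Fin p → A.F n')
    (x : Fin (n + p)) :
    A.mult (A.extMult g p x) (Fin.addCases (fun y => A.ν y) v) = Fin.addCases g v x := by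
  induction x using Fin.addCases <;> simp [A.mult_dinat, A.mult_unit_right, A.mult_unit_left]

theorem mult_map_midWeak_addCases {n p b : ℕ} (x : A.F (n + b)) (v : Fin p → A.F n) :
    A.mult (A.map (midWeak n p b) x) (A.extMult (Fin.addCases (fun y => A.ν y) v) b) = x := by
  rw [A.mult_dinat]
  refine (congrArg (A.mult x) ?_).trans (A.mult_unit_right x)
  funext y
  induction y using Fin.addCases <;> simp [midWeak_eq_extRen, A.ν_nat]

end SO.SubstMonoid

namespace SO

variable {S : SOSig} (A : SOModel S) {k : ℕ} {mar : Fin k → ℕ}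

/-- `interp` with the variables valued in `A` itself rather than in `y j`, so that substitution
of terms for variables can be interpreted. -/
def eval : ∀ {n j : ℕ}, Term S (Fin k) mar n →
    (∀ i : Fin k, A.F (j + mar i)) → (Fin n → A.F j) → A.F j
  | _, _, .var x, _, g => g x
  | _, _, .mvar m ts, θ, g => A.mult (θ m) (Fin.addCases (fun v => A.ν v) fun v => eval (ts v) θ g)
  | _, _, .op o ts, θ, g =>
      A.opMap o fun i =>
        eval (ts i) (fun m => A.map (midWeak _ _ (mar m)) (θ m)) (A.extMult g _)

theorem interp_eq_eval {n j : ℕ} (t : Term S (Fin k) mar n) (θ : ∀ i, A.F (j + mar i))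
    (γ : Fin n → Fin j) : interp A t θ γ = eval A t θ (fun x => A.ν (γ x)) := by
  induction t generalizing j with
  | var x => rfl
  | mvar m ts ih => simp [interp, eval, ih]
  | op o ts ih => simp [interp, eval, ih, SubstMonoid.extMult_ν]

theorem eval_rename {n n' j : ℕ} (t : Term S (Fin k) mar n) (r : Fin n → Fin n')
    (θ : ∀ i, A.F (j + mar i)) (g : Fin n' → A.F j) :
    eval A (rename t r) θ g = eval A t θ (fun x => g (r x)) := by
  induction t generalizing n' j with
  | var x => rfl
  | mvar m ts ih => simp [rename, eval, ih]
  | op o ts ih => simp [rename, eval, ih, SubstMonoid.extMult_extRen]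

theorem map_eval {n j j' : ℕ} (t : Term S (Fin k) mar n) (ρ : Fin j → Fin j')
    (θ : ∀ i, A.F (j + mar i)) (g : Fin n → A.F j) :
    A.map ρ (eval A t θ g)
      = eval A t (fun m => A.map (extRen ρ (mar m)) (θ m)) (fun x => A.map ρ (g x)) := by
  induction t generalizing j j' with
  | var x => rfl
  | mvar m ts ih =>
    simp only [eval, A.mult_nat, A.mult_dinat]
    congr 1
    funext x
    induction x using Fin.addCases <;> simp [A.ν_nat, ih]
  | op o ts ih =>
    simp [eval, A.opMap_nat, ih, SubstMonoid.map_extMult, SubstMonoid.map_map,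
      midWeak_eq_extRen, extRen_extRen]

theorem eval_extSub {n n' j : ℕ} (σ : Fin n → Term S (Fin k) mar n') (p : ℕ)
    (θ : ∀ i, A.F (j + mar i)) (g : Fin n' → A.F j) (x : Fin (n + p)) :
    eval A (extSub σ p x) (fun m => A.map (midWeak j p (mar m)) (θ m)) (A.extMult g p)
      = A.extMult (fun y => eval A (σ y) θ g) p x := by
  induction x using Fin.addCases <;> simp [eval, weaken, eval_rename, map_eval, midWeak_eq_extRen]

theorem eval_subst {n n' j : ℕ} (t : Term S (Fin k) mar n) (σ : Fin n → Term S (Fin k) mar n')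
    (θ : ∀ i, A.F (j + mar i)) (g : Fin n' → A.F j) :
    eval A (subst t σ) θ g = eval A t θ (fun x => eval A (σ x) θ g) := by
  induction t generalizing n' j with
  | var x => rfl
  | mvar m ts ih => simp [subst, eval, ih]
  | op o ts ih => simp [subst, eval, ih, eval_extSub]

theorem mult_eval {n J j : ℕ} (t : Term S (Fin k) mar n) (θ : ∀ i, A.F (J + mar i))
    (g : Fin n → A.F J) (h : Fin J → A.F j) :
    A.mult (eval A t θ g) h
      = eval A t (fun m => A.mult (θ m) (A.extMult h (mar m))) (fun x => A.mult (g x) h) := by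
  induction t generalizing J j with
  | var x => rfl
  | mvar m ts ih =>
    simp only [eval, A.mult_assoc]
    congr 1
    funext x
    induction x using Fin.addCases <;> simp [A.mult_unit_left, A.mult_dinat, A.mult_unit_right, ih]
  | op o ts ih =>
    simp [eval, A.opMap_mult, ih, SubstMonoid.mult_map_midWeak, SubstMonoid.mult_extMult]

theorem eval_msubst {k' : ℕ} {mar' : Fin k' → ℕ} {n n' j : ℕ} (t : Term S (Fin k) mar n)
    (ρ : Fin n → Fin n') (s : ∀ m, Term S (Fin k') mar' (n' + mar m))
    (θ : ∀ i, A.F (j + mar' i)) (g : Fin n' → A.F j) :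
    eval A (msubst t ρ s) θ g
      = eval A t (fun m => eval A (s m) (fun m' => A.map (midWeak j (mar m) (mar' m')) (θ m'))
          (A.extMult g (mar m))) (fun x => g (ρ x)) := by
  induction t generalizing n' j with
  | var x => rfl
  | mvar m ts ih =>
    simp only [msubst, eval, eval_subst, mult_eval, SubstMonoid.mult_map_midWeak_addCases,
      SubstMonoid.mult_extMult_addCases]
    congr 1
    funext x
    induction x using Fin.addCases <;> simp [eval, ih]
  | op o ts ih =>
    simp [msubst, eval, ih, eval_rename, map_eval, midWeak_eq_extRen, extRen_extRen,
      SubstMonoid.extMult_extRen, SubstMonoid.map_extMult, SubstMonoid.map_map]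

theorem interp_rename {n n' j : ℕ} (t : Term S (Fin k) mar n) (r : Fin n → Fin n')
    (θ : ∀ i, A.F (j + mar i)) (γ : Fin n' → Fin j) :
    interp A (rename t r) θ γ = interp A t θ (fun x => γ (r x)) := by
  simp [interp_eq_eval, eval_rename]

theorem interp_msubst {k' : ℕ} {mar' : Fin k' → ℕ} {n n' j : ℕ} (t : Term S (Fin k) mar n)
    (ρ : Fin n → Fin n') (s : ∀ m, Term S (Fin k') mar' (n' + mar m))
    (θ : ∀ i, A.F (j + mar' i)) (γ : Fin n' → Fin j) :
    interp A (msubst t ρ s) θ γ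
      = interp A t (fun m => interp A (s m) (fun m' => A.map (midWeak j (mar m) (mar' m')) (θ m'))
          (extRen γ (mar m))) (fun x => γ (ρ x)) := by
  simp [interp_eq_eval, eval_msubst, SubstMonoid.extMult_ν]

theorem SODeriv.sound {E : Set (SOEqn S)} {n : ℕ} {s t : Term S (Fin k) mar n}
    (D : SODeriv S E k mar n s t) (hA : ∀ e ∈ E, A.Sat e) : A.Sat ⟨k, mar, n, s, t⟩ := by
  induction D with
  | ax he => exact hA _ he
  | refl => exact fun _ _ _ => rfl
  | symm _ ih => exact fun j θ γ => (ih j θ γ).symm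
  | trans _ _ ih₁ ih₂ => exact fun j θ γ => (ih₁ j θ γ).trans (ih₂ j θ γ)
  | msub _ _ ih ihσ =>
    intro j θ γ
    simp only [interp_msubst, interp_rename]
    exact (congrArg (fun θ' => interp A _ θ' _) (funext fun m => ihσ m ..)).trans (ih ..)

end SO

theorem Quotient.exists_rep_pi {ι : Type*} {α : ι → Type*} {s : ∀ i, Setoid (α i)}
    (g : ∀ i, Quotient (s i)) : ∃ f : ∀ i, α i, (fun i => Quotient.mk (s i) (f i)) = g :=
  ⟨fun i => (g i).out, funext fun i => Quotient.out_eq (g i)⟩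

namespace SO

variable {S : SOSig} (E : Set (SOEqn S)) {k : ℕ} {mar : Fin k → ℕ}

def derivSetoid (k : ℕ) (mar : Fin k → ℕ) (n : ℕ) : Setoid (Term S (Fin k) mar n) where
  r := SODeriv S E k mar n
  iseqv := ⟨SODeriv.refl, SODeriv.symm, SODeriv.trans⟩

abbrev TermQuot (k : ℕ) (mar : Fin k → ℕ) (n : ℕ) : Type := Quotient (derivSetoid E k mar n)

namespace TermQuot

variable {E}

theorem sound {n : ℕ} {a b : Term S (Fin k) mar n} (h : SODeriv S E k mar n a b) :
    (Quotient.mk _ a : TermQuot E k mar n) = Quotient.mk _ b :=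
  Quotient.sound h

theorem out_mk {n : ℕ} (a : Term S (Fin k) mar n) :
    SODeriv S E k mar n (Quotient.mk (derivSetoid E k mar n) a).out a :=
  Quotient.mk_out (s := derivSetoid E k mar n) a

/- The operations act on chosen representatives; the `_mk` lemmas show that they respect
derivability. -/

noncomputable def map {n n' : ℕ} (ρ : Fin n → Fin n') (a : TermQuot E k mar n) :
    TermQuot E k mar n' :=
  Quotient.mk _ (rename a.out ρ)

noncomputable def mult {m n : ℕ} (a : TermQuot E k mar m) (g : Fin m → TermQuot E k mar n) :
    TermQuot E k mar n :=
  Quotient.mk _ (subst a.out fun i => (g i).out)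

noncomputable def opMap (o : S.Op) {n : ℕ}
    (ts : ∀ i : Fin (S.arity o).len, TermQuot E k mar (n + (S.arity o).ar i)) :
    TermQuot E k mar n :=
  Quotient.mk _ (.op o fun i => (ts i).out)

@[simp]
theorem map_mk {n n' : ℕ} (ρ : Fin n → Fin n') (a : Term S (Fin k) mar n) :
    map ρ (Quotient.mk _ a : TermQuot E k mar n) = Quotient.mk _ (rename a ρ) :=
  sound ((out_mk a).rename ρ)

@[simp]
theorem mult_mk {m n : ℕ} (a : Term S (Fin k) mar m) (f : Fin m → Term S (Fin k) mar n) :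
    mult (Quotient.mk _ a : TermQuot E k mar m) (fun i => Quotient.mk _ (f i))
      = Quotient.mk _ (subst a f) :=
  sound ((out_mk a).subst fun i => out_mk (f i))

@[simp]
theorem opMap_mk (o : S.Op) {n : ℕ}
    (ts : ∀ i : Fin (S.arity o).len, Term S (Fin k) mar (n + (S.arity o).ar i)) :
    opMap o (fun i => (Quotient.mk _ (ts i) : TermQuot E k mar _)) = Quotient.mk _ (.op o ts) :=
  sound (SODeriv.op o fun i => out_mk (ts i))

end TermQuot

open TermQuot in
noncomputable abbrev termSubstMonoid (k : ℕ) (mar : Fin k → ℕ) : SubstMonoid where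
  F := TermQuot E k mar
  map := map
  map_id x := by
    induction x using Quotient.ind
    exact (map_mk _ _).trans (congrArg _ (rename_id _))
  map_comp f g x := by
    induction x using Quotient.ind
    simp [rename_rename, Function.comp_def]
  ν i := Quotient.mk _ (.var i)
  ν_nat ρ i := map_mk ρ (.var i)
  mult := mult
  mult_dinat ρ a g := by
    induction a using Quotient.ind
    obtain ⟨f, rfl⟩ := Quotient.exists_rep_pi g
    simp [subst_rename]
  mult_nat ρ a g := by
    induction a using Quotient.ind
    obtain ⟨f, rfl⟩ := Quotient.exists_rep_pi g
    simp [rename_subst]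
  mult_unit_left i g := by
    obtain ⟨f, rfl⟩ := Quotient.exists_rep_pi g
    exact mult_mk (.var i) f
  mult_unit_right a := by
    induction a using Quotient.ind
    exact (mult_mk _ _).trans (congrArg _ (subst_var _))
  mult_assoc a f g := by
    induction a using Quotient.ind
    obtain ⟨f, rfl⟩ := Quotient.exists_rep_pi f
    obtain ⟨g, rfl⟩ := Quotient.exists_rep_pi g
    simp [subst_subst]

theorem termSubstMonoid_extMult_mk {n n' : ℕ} (g : Fin n → Term S (Fin k) mar n') (p : ℕ) :
    (termSubstMonoid E k mar).extMult (fun i => Quotient.mk _ (g i)) p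
      = fun x => Quotient.mk _ (extSub g p x) := by
  funext x
  induction x using Fin.addCases <;> simp [termSubstMonoid, weaken]

open TermQuot in
noncomputable abbrev termModel (k : ℕ) (mar : Fin k → ℕ) : SOModel S where
  toSubstMonoid := termSubstMonoid E k mar
  opMap := opMap
  opMap_nat := by
    intro o n n' ρ ts
    obtain ⟨ts, rfl⟩ := Quotient.exists_rep_pi ts
    simp [termSubstMonoid, rename]
  opMap_mult := by
    intro o n n' ts g
    obtain ⟨ts, rfl⟩ := Quotient.exists_rep_pi ts
    obtain ⟨g, rfl⟩ := Quotient.exists_rep_pi g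
    simp [termSubstMonoid_extMult_mk, subst]

theorem interp_termModel {k₁ : ℕ} {mar₁ : Fin k₁ → ℕ} {n j : ℕ} (u : Term S (Fin k₁) mar₁ n)
    (θ : ∀ i, Term S (Fin k) mar (j + mar₁ i)) (γ : Fin n → Fin j) :
    interp (termModel E k mar) u (fun i => Quotient.mk _ (θ i)) γ
      = Quotient.mk _ (msubst u γ θ) := by
  induction u generalizing j with
  | var x => rfl
  | mvar m ts ih =>
    simp only [interp, ih, msubst, ← TermQuot.mult_mk]
    congr 1
    funext x
    induction x using Fin.addCases <;> simp
  | op o ts ih => simp [interp, ih, msubst]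

theorem termModel_sat {e : SOEqn S} (he : e ∈ E) : (termModel E k mar).Sat e := by
  intro j θ γ
  obtain ⟨θ, rfl⟩ := Quotient.exists_rep_pi θ
  simp only [interp_termModel]
  exact TermQuot.sound ((SODeriv.ax he).msubst γ fun i => .refl _)

/-- Under the generic assignment `𝕞ᵢ ↦ 𝕞ᵢ[x⃗]` the term model interprets every term as its own
class. -/
theorem SODeriv.of_termModel_sat {n : ℕ} {s t : Term S (Fin k) mar n}
    (h : (termModel E k mar).Sat ⟨k, mar, n, s, t⟩) : SODeriv S E k mar n s t := by
  have := h n (fun i => Quotient.mk _ (.mvar i fun v => .var (Fin.natAdd n v))) (fun x => x)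
  simp only [interp_termModel, msubst_mvar_self, rename_id] at this
  exact Quotient.exact this

end SO

/-- **Second-Order Soundness and Completeness.**
For a second-order equational presentation `ℰ = (Σ, E)`, an equation
`Θ ▹ Γ ⊢ s ≡ t` is derivable from `E` in Second-Order Equational Logic if and only if
every `ℰ`-model `A` in `Set^𝔽` (i.e. every `Σ`-monoid satisfying all axioms of `E`)
satisfies it, i.e. the interpretations `⟦Θ ▹ Γ ⊢ s⟧_A` and `⟦Θ ▹ Γ ⊢ t⟧_A` are equal
morphisms `⟦Θ ▹ Γ⟧_A → A` in `Set^𝔽`. -/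
theorem second_order_soundness_and_completeness
    {S : SOSig} (E : Set (SOEqn S)) {k : ℕ} {mar : Fin k → ℕ} {n : ℕ}
    (s t : Term S (Fin k) mar n) :
    SODeriv S E k mar n s t ↔
      ∀ A : SOModel S, (∀ e ∈ E, A.Sat e) → A.Sat ⟨k, mar, n, s, t⟩ :=
  ⟨fun D A hA => D.sound A hA,
    fun h => SODeriv.of_termModel_sat E (h _ fun _ he => termModel_sat E he)⟩
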